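/- arXiv:1508.05251 — 2 statements merged into one kernel-verified Lean document; each statement's English description precedes it below -/
import Mathlib

section
/- (Gauss–Milgram; well-definedness of the Brown invariant) For every nondegenerate finite quadratic form (𝓛, q), the Gauss sum Σ_{x ∈ 𝓛} exp(iπ q(x)) (well defined since q takes values in ℚ/2ℤ) equals |𝓛|^{1/2} · exp(iπ k/4) for some integer k; in particular its absolute value is |𝓛|^{1/2}. -/
/-!
Write `G = Σ_x exp(iπ q(x))`. Expanding `G·Ḡ` and substituting `x = y + z` gives
`Σ_z exp(iπ q(z)) Σ_y exp(2πi b(z, y))`; by nondegeneracy the inner character sum vanishes unless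
`z = 0`, so `|G|² = |𝓛|`.

To see that `G⁴` is real, write `|𝓛|² - 1 = a² + b² + c² + d²` (Lagrange) and let the quaternion
`a + bi + cj + dk` act on `𝓛⁴` by left multiplication. This multiplies `q(x₁) + ⋯ + q(x₄)` by
`a² + b² + c² + d²`, which acts as `-1` on `𝓛` and on the values of `q` (as `|𝓛|² q(x) = q(|𝓛| x) = 0`).
So it is a bijection of `𝓛⁴` negating the form, whence `G⁴ = conj G⁴`. A complex number of modulus
`√|𝓛|` whose fourth power is real is `√|𝓛| exp(iπk/4)`.
-/

noncomputable section

abbrev QmodTwo : Type := ℚ ⧸ AddSubgroup.zmultiples (2 : ℚ)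
abbrev QmodOne : Type := ℚ ⧸ AddSubgroup.zmultiples (1 : ℚ)

def qmk : ℚ → QmodTwo := QuotientAddGroup.mk
def qmk1 : ℚ → QmodOne := QuotientAddGroup.mk

/-- The doubling homomorphism `ℚ/ℤ → ℚ/2ℤ`, `r ↦ 2r`. -/
def dbl : QmodOne →+ QmodTwo :=
  QuotientAddGroup.map _ _ (AddMonoidHom.mk' (fun r : ℚ => 2 * r) (by intro a b; ring)) (by
    intro x hx
    obtain ⟨k, hk⟩ := AddSubgroup.mem_zmultiples_iff.mp hx
    refine AddSubgroup.mem_comap.mpr (AddSubgroup.mem_zmultiples_iff.mpr ⟨k, ?_⟩)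
    simp only [AddMonoidHom.mk'_apply, ← hk, zsmul_eq_mul]
    ring)

/-- The natural projection `ℚ/2ℤ → ℚ/ℤ`. -/
def toQmodOne : QmodTwo →+ QmodOne :=
  QuotientAddGroup.map _ _ (AddMonoidHom.id ℚ) (by
    intro x hx
    obtain ⟨k, hk⟩ := AddSubgroup.mem_zmultiples_iff.mp hx
    exact AddSubgroup.mem_comap.mpr (AddSubgroup.mem_zmultiples_iff.mpr ⟨2 * k, by
      simp only [AddMonoidHom.id_apply, ← hk, zsmul_eq_mul]
      push_cast
      ring⟩))

/-- `exp(iπ t)` for `t ∈ ℚ/2ℤ`. -/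
def ePi : QmodTwo → ℂ :=
  Quotient.lift (fun r : ℚ => Complex.exp (Real.pi * Complex.I * (r : ℂ))) (by
    intro a b hab
    have h : -a + b ∈ AddSubgroup.zmultiples (2:ℚ) := QuotientAddGroup.leftRel_apply.mp hab
    obtain ⟨k, hk⟩ := AddSubgroup.mem_zmultiples_iff.mp h
    have hb : (b : ℚ) = a + k * 2 := by
      have := hk
      rw [zsmul_eq_mul] at this
      linarith [this]
    rw [hb]
    push_cast
    rw [mul_add, Complex.exp_add]

    have : (Real.pi : ℂ) * Complex.I * ((k:ℂ) * 2) = (k : ℤ) * (2 * Real.pi * Complex.I) := by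
      push_cast; ring
    rw [this, Complex.exp_int_mul_two_pi_mul_I, mul_one])

structure FinQuadForm (L : Type) [AddCommGroup L] where
  q : L → QmodTwo
  b : L → L → QmodOne
  b_symm : ∀ x y, b x y = b y x
  b_add : ∀ x y z, b (x + y) z = b x z + b y z
  q_zsmul : ∀ (n : ℤ) (x : L), q (n • x) = (n ^ 2 : ℤ) • q x
  q_add : ∀ x y, q (x + y) - q x - q y = dbl (b x y)

variable {L : Type} [AddCommGroup L]

/-- The adjoint homomorphism `x ↦ b(x, ·)` into `Hom(L, ℚ/ℤ)`. -/
def FinQuadForm.toHom (F : FinQuadForm L) (x : L) : L →+ QmodOne :=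
  AddMonoidHom.mk' (fun y => F.b x y) (fun y z => by
    show F.b x (y + z) = F.b x y + F.b x z
    rw [F.b_symm x (y + z), F.b_add, F.b_symm y x, F.b_symm z x])

/-- Nondegeneracy: `x ↦ b(x, ·)` is an isomorphism onto `Hom(L, ℚ/ℤ)`. -/
def FinQuadForm.Nondegenerate (F : FinQuadForm L) : Prop :=
  Function.Bijective F.toHom

open Complex ComplexConjugate

lemma ePi_mk (r : ℚ) : ePi (r : QmodTwo) = exp (Real.pi * I * (r : ℂ)) := rfl

def ePiChar : AddChar QmodTwo ℂ where
  toFun := ePi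
  map_zero_eq_one' := by simpa using ePi_mk 0
  map_add_eq_mul' s t := by
    induction s using QuotientAddGroup.induction_on with | H r =>
    induction t using QuotientAddGroup.induction_on with | H r' =>
    rw [← QuotientAddGroup.mk_add, ePi_mk, ePi_mk, ePi_mk, ← exp_add]
    push_cast
    ring_nf

lemma ePi_add (s t : QmodTwo) : ePi (s + t) = ePi s * ePi t := ePiChar.map_add_eq_mul s t

lemma ePi_zero : ePi 0 = 1 := ePiChar.map_zero_eq_one

lemma ePi_neg (t : QmodTwo) : ePi (-t) = conj (ePi t) := by
  induction t using QuotientAddGroup.induction_on with | H r =>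
  rw [← QuotientAddGroup.mk_neg, ePi_mk, ePi_mk, ← exp_conj]
  simp

lemma dbl_mk (r : ℚ) : dbl (r : QmodOne) = ((2 * r : ℚ) : QmodTwo) := rfl

lemma ePi_dbl_eq_one_iff (t : QmodOne) : ePi (dbl t) = 1 ↔ t = 0 := by
  refine ⟨fun h => ?_, fun h => by rw [h, map_zero, ePi_zero]⟩
  induction t using QuotientAddGroup.induction_on with | H r =>
  rw [dbl_mk, ePi_mk, exp_eq_one_iff] at h
  obtain ⟨m, hm⟩ := h
  have hr : (r : ℂ) = m := by
    have hπ : (Real.pi : ℂ) ≠ 0 := ofReal_ne_zero.mpr Real.pi_ne_zero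
    apply mul_left_cancel₀ (mul_ne_zero (mul_ne_zero two_ne_zero hπ) I_ne_zero)
    push_cast at hm
    linear_combination hm
  rw [QuotientAddGroup.eq_zero_iff, show r = m by exact_mod_cast hr]
  exact ⟨m, by simp⟩

/-- Left multiplication by the quaternion `a + bi + cj + dk` on `L⁴`. -/
def quatMul (a b c d : ℤ) (p : Fin 4 → L) : Fin 4 → L :=
  ![a • p 0 + (-b) • p 1 + (-c) • p 2 + (-d) • p 3,
    b • p 0 + a • p 1 + (-d) • p 2 + c • p 3,
    c • p 0 + d • p 1 + a • p 2 + (-b) • p 3,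
    d • p 0 + (-c) • p 1 + b • p 2 + a • p 3]

lemma quatMul_conj_quatMul (a b c d : ℤ) (p : Fin 4 → L) :
    quatMul a (-b) (-c) (-d) (quatMul a b c d p) = (a ^ 2 + b ^ 2 + c ^ 2 + d ^ 2) • p := by
  ext i
  fin_cases i <;> simp [quatMul] <;> module

lemma quatMul_injective {a b c d : ℤ}
    (h : Function.Injective fun x : L => (a ^ 2 + b ^ 2 + c ^ 2 + d ^ 2) • x) :
    Function.Injective (quatMul (L := L) a b c d) := by
  intro p p' hp
  have hconj := congrArg (quatMul a (-b) (-c) (-d)) hp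
  rw [quatMul_conj_quatMul, quatMul_conj_quatMul] at hconj
  exact funext fun i => h (congrFun hconj i)

lemma Int.exists_sum_four_squares {n : ℤ} (hn : 0 ≤ n) :
    ∃ a b c d : ℤ, a ^ 2 + b ^ 2 + c ^ 2 + d ^ 2 = n := by
  obtain ⟨a, b, c, d, h⟩ := Nat.sum_four_squares n.toNat
  exact ⟨a, b, c, d, by rw [← Int.toNat_of_nonneg hn, ← h]; push_cast; rfl⟩

lemma zsmul_card_sq_sub_one {A : Type*} [AddCommGroup A] [Fintype A] (x : A) :
    ((Fintype.card A : ℤ) ^ 2 - 1) • x = -x := by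
  rw [sub_zsmul, one_zsmul, sq, mul_zsmul, natCast_zsmul, card_nsmul_eq_zero, zero_add]

namespace FinQuadForm

variable (F : FinQuadForm L)

lemma q_zero : F.q 0 = 0 := by simpa using F.q_zsmul 0 0

lemma q_add_eq (x y : L) : F.q (x + y) = F.q x + F.q y + dbl (F.b x y) := by
  rw [← F.q_add x y]; abel

def bHom : L →+ L →+ QmodOne :=
  AddMonoidHom.mk' F.toHom fun x y => AddMonoidHom.ext fun z => F.b_add x y z

lemma b_zsmul_left (n : ℤ) (x y : L) : F.b (n • x) y = n • F.b x y :=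
  congrArg (· y) (map_zsmul F.bHom n x)

lemma b_zsmul_right (n : ℤ) (x y : L) : F.b x (n • y) = n • F.b x y := map_zsmul (F.toHom x) n y

lemma toHom_zero : F.toHom 0 = 0 := F.bHom.map_zero

lemma q_zsmul_card_sq_sub_one [Fintype L] (x : L) :
    ((Fintype.card L : ℤ) ^ 2 - 1) • F.q x = -F.q x := by
  rw [sub_zsmul, one_zsmul, ← F.q_zsmul, natCast_zsmul, card_nsmul_eq_zero, q_zero, zero_add]

-- The cross terms cancel because the columns of the matrix of `quatMul` are orthogonal.
lemma sum_q_quatMul (a b c d : ℤ) (p : Fin 4 → L) :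
    ∑ i, F.q (quatMul a b c d p i) = (a ^ 2 + b ^ 2 + c ^ 2 + d ^ 2) • ∑ i, F.q (p i) := by
  simp only [quatMul, Fin.sum_univ_four, Matrix.cons_val, q_add_eq, q_zsmul, b_add,
    b_zsmul_left, b_zsmul_right, map_add, map_zsmul]
  module

def bChar (x : L) : AddChar L ℂ := ePiChar.compAddMonoidHom (dbl.comp (F.toHom x))

lemma bChar_eq_zero_iff {F : FinQuadForm L} (hnd : F.Nondegenerate) (x : L) :
    F.bChar x = 0 ↔ x = 0 := by
  refine ⟨fun h => hnd.injective ?_, fun h => ?_⟩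
  · rw [toHom_zero]
    ext y
    exact (ePi_dbl_eq_one_iff _).mp (DFunLike.congr_fun h y)
  · ext y
    simp [bChar, h, toHom_zero]

lemma ePi_q_add_mul_ePi_neg_q (y z : L) :
    ePi (F.q (y + z)) * ePi (-F.q y) = ePi (F.q z) * F.bChar z y := by
  rw [← ePi_add, q_add_eq, F.b_symm]
  have : F.q y + F.q z + dbl (F.b z y) + -F.q y = F.q z + dbl (F.b z y) := by abel
  rw [this, ePi_add]
  rfl

variable [Fintype L]

def gaussSum : ℂ := ∑ x, ePi (F.q x)

lemma gaussSum_mul_conj (hnd : F.Nondegenerate) :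
    F.gaussSum * conj F.gaussSum = Fintype.card L := by
  classical
  calc F.gaussSum * conj F.gaussSum
      = ∑ y, ∑ x, ePi (F.q x) * ePi (-F.q y) := by
        simp only [gaussSum, map_sum, ← ePi_neg, Finset.sum_mul_sum]
        exact Finset.sum_comm
    _ = ∑ y, ∑ z, ePi (F.q z) * F.bChar z y := by
        refine Finset.sum_congr rfl fun y _ => ?_
        rw [← Equiv.sum_comp (Equiv.addLeft y)]
        exact Finset.sum_congr rfl fun z _ => F.ePi_q_add_mul_ePi_neg_q y z
    _ = ∑ z, ePi (F.q z) * if z = 0 then (Fintype.card L : ℂ) else 0 := by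
        rw [Finset.sum_comm]
        refine Finset.sum_congr rfl fun z _ => ?_
        rw [← Finset.mul_sum, AddChar.sum_eq_ite]
        simp only [bChar_eq_zero_iff hnd]
    _ = Fintype.card L := by simp [q_zero, ePi_zero]

lemma norm_gaussSum (hnd : F.Nondegenerate) : ‖F.gaussSum‖ = √(Fintype.card L) := by
  have h := F.gaussSum_mul_conj hnd
  rw [mul_conj] at h
  rw [norm_def, show normSq F.gaussSum = Fintype.card L by exact_mod_cast h]

lemma gaussSum_pow_four : F.gaussSum ^ 4 = ∑ p : Fin 4 → L, ePi (∑ i, F.q (p i)) := by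
  classical
  rw [gaussSum, ← Fin.prod_const, Fintype.prod_sum]
  refine Finset.sum_congr rfl fun p _ => ?_
  simp only [Fin.prod_univ_four, Fin.sum_univ_four, ePi_add]

lemma conj_gaussSum_pow_four : conj (F.gaussSum ^ 4) = F.gaussSum ^ 4 := by
  obtain ⟨a, b, c, d, habcd⟩ :=
    Int.exists_sum_four_squares (n := (Fintype.card L : ℤ) ^ 2 - 1) <| by
      have : 1 ≤ Fintype.card L := Fintype.card_pos
      nlinarith
  have hbij : Function.Bijective (quatMul (L := L) a b c d) := by
    refine Finite.injective_iff_bijective.mp (quatMul_injective ?_)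
    simpa only [habcd, zsmul_card_sq_sub_one] using neg_injective
  have hneg (p : Fin 4 → L) : ∑ i, F.q (quatMul a b c d p i) = -∑ i, F.q (p i) := by
    rw [sum_q_quatMul, habcd, Finset.smul_sum, ← Finset.sum_neg_distrib]
    exact Finset.sum_congr rfl fun i _ => F.q_zsmul_card_sq_sub_one (p i)
  rw [gaussSum_pow_four, map_sum]
  simp only [← ePi_neg, ← hneg]
  exact Fintype.sum_bijective _ hbij _ _ fun p => rfl

end FinQuadForm

lemma Complex.exists_eq_norm_mul_exp_of_im_pow_four_eq_zero {z : ℂ} (hz : (z ^ 4).im = 0) :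
    ∃ k : ℤ, z = ‖z‖ * exp (Real.pi * I * k / 4) := by
  rcases eq_or_ne z 0 with rfl | hz0
  · exact ⟨0, by simp⟩
  have hpow : z ^ 4 = (‖z‖ ^ 4 : ℝ) * exp ((4 * arg z : ℝ) * I) := by
    conv_lhs => rw [← norm_mul_exp_arg_mul_I z]
    rw [mul_pow, ← exp_nat_mul]
    push_cast
    ring_nf
  have hsin : Real.sin (4 * arg z) = 0 := by
    rw [hpow, im_ofReal_mul, exp_ofReal_mul_I_im] at hz
    exact (mul_eq_zero.mp hz).resolve_left (by positivity)
  obtain ⟨k, hk⟩ := Real.sin_eq_zero_iff.mp hsin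
  refine ⟨k, ?_⟩
  conv_lhs => rw [← norm_mul_exp_arg_mul_I z]
  rw [show arg z = k * Real.pi / 4 by linarith]
  push_cast
  ring_nf

open Complex in
/-- Gauss–Milgram: for a nondegenerate finite quadratic form `(𝓛, q)` the Gauss
sum `Σ_x exp(iπ q(x))` equals `|𝓛|^{1/2}·exp(iπk/4)` for some integer `k`; in particular its
absolute value is `|𝓛|^{1/2}`. -/
theorem gauss_milgram (L : Type) [AddCommGroup L] [Fintype L]
    (F : FinQuadForm L) (hnd : F.Nondegenerate) :
    (∃ k : ℤ, ∑ x : L, ePi (F.q x) =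
      (Real.sqrt (Fintype.card L) : ℂ) *
        Complex.exp (Real.pi * Complex.I * (k : ℂ) / 4)) ∧
    ‖∑ x : L, ePi (F.q x)‖ = Real.sqrt (Fintype.card L) := by
  have hnorm : ‖F.gaussSum‖ = √(Fintype.card L) := F.norm_gaussSum hnd
  have him : (F.gaussSum ^ 4).im = 0 := conj_eq_iff_im.mp F.conj_gaussSum_pow_four
  obtain ⟨k, hk⟩ := exists_eq_norm_mul_exp_of_im_pow_four_eq_zero him
  rw [hnorm] at hk
  exact ⟨⟨k, hk⟩, hnorm⟩
end
end

section
/- (Brown invariant of 2-primary cyclic blocks) For every k ≥ 1 and every odd integer a, Σ_{x=0}^{2^k−1} exp(iπ a x²/2^k) = 2^{k/2} · exp(iπ(a + k(a²−1)/2)/4); equivalently, Br⟨a/2^k⟩ = a + k(a²−1)/2 mod 8. -/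
open Complex Finset

lemma exp_period (B : ℂ) (m : ℤ) : cexp (B + m * (2*Real.pi*I)) = cexp B := by
  rw [Complex.exp_add, Complex.exp_int_mul_two_pi_mul_I, mul_one]

lemma exp_int_pi (n : ℤ) (hn : Odd n) : cexp ((n:ℂ) * (Real.pi*I)) = -1 := by
  rw [Complex.exp_int_mul, Complex.exp_pi_mul_I, Odd.neg_one_zpow hn]

lemma sum_double (n : ℕ) (f : ℕ → ℂ) :
    ∑ x ∈ range (2*n), f x = ∑ y ∈ range n, (f (2*y) + f (2*y+1)) := by
  induction n with
  | zero => simp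
  | succ n ih =>
    have h : 2*(n+1) = 2*n+1+1 := by ring
    rw [h, sum_range_succ, sum_range_succ, ih, sum_range_succ, add_assoc]

lemma sqrt2_exp : (Real.sqrt 2 : ℂ) * cexp (Real.pi * I / 4) = 1 + I := by
  have h : (Real.pi : ℂ) * I / 4 = ((Real.pi/4 : ℝ) : ℂ) * I := by push_cast; ring
  rw [h, Complex.exp_mul_I, ← Complex.ofReal_cos, ← Complex.ofReal_sin,
    Real.cos_pi_div_four, Real.sin_pi_div_four]
  have h2 : (Real.sqrt 2 : ℂ) * Real.sqrt 2 = 2 := by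
    rw [← Complex.ofReal_mul, Real.mul_self_sqrt (by norm_num : (0:ℝ) ≤ 2)]
    norm_num
  push_cast
  linear_combination (1/2 + I/2) * h2

lemma brown_step (j : ℕ) (a : ℤ) (ha : Odd a) :
    ∑ x ∈ range (2 ^ (j+3)), cexp (Real.pi * I * (a:ℂ) * (x:ℂ)^2 / (2:ℂ)^(j+3)) =
    2 * ∑ x ∈ range (2 ^ (j+1)), cexp (Real.pi * I * (a:ℂ) * (x:ℂ)^2 / (2:ℂ)^(j+1)) := by
  have h2 : (2:ℂ)^(j+1) ≠ 0 := pow_ne_zero _ two_ne_zero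
  have h3 : (2:ℂ)^(j+3) ≠ 0 := pow_ne_zero _ two_ne_zero
  rw [show (2:ℕ)^(j+3) = 2 * 2^(j+2) by ring, sum_double, Finset.sum_add_distrib]
  have heven : ∀ y ∈ range (2^(j+2)),
      cexp (Real.pi * I * (a:ℂ) * ((2*y : ℕ):ℂ)^2 / (2:ℂ)^(j+3)) =
      cexp (Real.pi * I * (a:ℂ) * ((y : ℕ):ℂ)^2 / (2:ℂ)^(j+1)) := by
    intro y _
    congr 1
    push_cast
    field_simp
    ring
  rw [Finset.sum_congr rfl heven]
  have hodd : ∑ y ∈ range (2^(j+2)),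
      cexp (Real.pi * I * (a:ℂ) * ((2*y+1 : ℕ):ℂ)^2 / (2:ℂ)^(j+3)) = 0 := by
    rw [show (2:ℕ)^(j+2) = 2^(j+1) + 2^(j+1) by ring, Finset.sum_range_add]
    have hshift : ∀ i ∈ range (2^(j+1)),
        cexp (Real.pi * I * (a:ℂ) * ((2*(2^(j+1) + i)+1 : ℕ):ℂ)^2 / (2:ℂ)^(j+3)) =
        - cexp (Real.pi * I * (a:ℂ) * ((2*i+1 : ℕ):ℂ)^2 / (2:ℂ)^(j+3)) := by
      intro i _
      have harg : (Real.pi : ℂ) * I * (a:ℂ) * ((2*(2^(j+1) + i)+1 : ℕ):ℂ)^2 / (2:ℂ)^(j+3) =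
          Real.pi * I * (a:ℂ) * ((2*i+1 : ℕ):ℂ)^2 / (2:ℂ)^(j+3)
            + ((a * (2*i+1+2^(j+1)) : ℤ):ℂ) * (Real.pi * I) := by
        push_cast
        field_simp
        ring
      rw [harg, Complex.exp_add, exp_int_pi _ (by
        obtain ⟨m, hm⟩ := ha
        exact ⟨m*(2*i+1+2^(j+1)) + i + 2^j, by rw [hm]; ring⟩), mul_neg_one]
    rw [Finset.sum_congr rfl hshift, Finset.sum_neg_distrib, add_neg_cancel]
  rw [hodd, add_zero, show (2:ℕ)^(j+2) = 2^(j+1) + 2^(j+1) by ring, Finset.sum_range_add]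
  have hshift2 : ∀ i ∈ range (2^(j+1)),
      cexp (Real.pi * I * (a:ℂ) * ((2^(j+1) + i : ℕ):ℂ)^2 / (2:ℂ)^(j+1)) =
      cexp (Real.pi * I * (a:ℂ) * ((i : ℕ):ℂ)^2 / (2:ℂ)^(j+1)) := by
    intro i _
    have harg : (Real.pi : ℂ) * I * (a:ℂ) * ((2^(j+1) + i : ℕ):ℂ)^2 / (2:ℂ)^(j+1) =
        Real.pi * I * (a:ℂ) * ((i : ℕ):ℂ)^2 / (2:ℂ)^(j+1)
          + ((a * (2^j + i) : ℤ):ℂ) * (2*Real.pi*I) := by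
      push_cast
      field_simp
      ring
    rw [harg, exp_period]
  rw [Finset.sum_congr rfl hshift2]
  ring

lemma exp_pi_half : cexp (Real.pi * I / 2) = I := by
  have h : (Real.pi : ℂ) * I / 2 = ((Real.pi/2 : ℝ) : ℂ) * I := by push_cast; ring
  rw [h, Complex.exp_mul_I, ← Complex.ofReal_cos, ← Complex.ofReal_sin,
    Real.cos_pi_div_two, Real.sin_pi_div_two]
  simp

lemma brown_base1 (a : ℤ) (ha : Odd a) :
    ∑ x ∈ Finset.range (2 ^ 1), cexp (Real.pi * I * (a:ℂ) * (x:ℂ)^2 / (2:ℂ)^1) =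
    (Real.sqrt (2 ^ 1) : ℂ) * cexp (Real.pi * I * ((a:ℂ) + ((1:ℕ):ℂ) * ((a:ℂ)^2-1)/2)/4) := by
  obtain ⟨m, hm⟩ := ha
  have hs1 : ((2:ℝ)^1) = 2 := by norm_num
  rw [show (2:ℕ)^1 = 2 by norm_num, sum_range_succ, sum_range_succ, sum_range_zero, hs1]
  rcases Int.even_or_odd m with ⟨s, hs⟩ | ⟨s, hs⟩
  · have haC : (a:ℂ) = 4*s+1 := by rw [hm, hs]; push_cast; ring
    have h0 : (Real.pi:ℂ) * I * (a:ℂ) * ((0:ℕ):ℂ)^2 / (2:ℂ)^1 = 0 := by push_cast; ring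
    have h1 : (Real.pi:ℂ) * I * (a:ℂ) * ((1:ℕ):ℂ)^2 / (2:ℂ)^1 =
        Real.pi * I / 2 + ((s:ℤ):ℂ) * (2*Real.pi*I) := by rw [haC]; push_cast; ring
    have h2 : (Real.pi:ℂ) * I * ((a:ℂ) + ((1:ℕ):ℂ) * ((a:ℂ)^2-1)/2)/4 =
        Real.pi * I / 4 + ((s^2+s : ℤ):ℂ) * (2*Real.pi*I) := by rw [haC]; push_cast; ring
    rw [h0, h1, h2, exp_period, exp_period, Complex.exp_zero, exp_pi_half, sqrt2_exp]
    ring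
  · have haC : (a:ℂ) = 4*s+3 := by rw [hm, hs]; push_cast; ring
    have h0 : (Real.pi:ℂ) * I * (a:ℂ) * ((0:ℕ):ℂ)^2 / (2:ℂ)^1 = 0 := by push_cast; ring
    have h1 : (Real.pi:ℂ) * I * (a:ℂ) * ((1:ℕ):ℂ)^2 / (2:ℂ)^1 =
        (Real.pi * I + Real.pi * I / 2) + ((s:ℤ):ℂ) * (2*Real.pi*I) := by
      rw [haC]; push_cast; ring
    have h2 : (Real.pi:ℂ) * I * ((a:ℂ) + ((1:ℕ):ℂ) * ((a:ℂ)^2-1)/2)/4 =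
        (Real.pi * I / 4 + (Real.pi * I + Real.pi * I / 2)) + ((s^2+2*s : ℤ):ℂ) * (2*Real.pi*I) := by
      rw [haC]; push_cast; ring
    rw [h0, h1, h2, exp_period, exp_period, Complex.exp_zero]
    simp only [Complex.exp_add, Complex.exp_pi_mul_I, exp_pi_half]
    linear_combination I * sqrt2_exp + Complex.I_sq

lemma odd_sq_sub_one (a : ℤ) (ha : Odd a) : ∃ c : ℤ, (a:ℂ)^2 - 1 = 8*c := by
  obtain ⟨m, hm⟩ := ha
  obtain ⟨c, hc⟩ := Int.even_mul_succ_self m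
  have hc' : ((m*(m+1) : ℤ):ℂ) = ((c+c : ℤ):ℂ) := by exact_mod_cast hc
  push_cast at hc'
  exact ⟨c, by rw [hm]; push_cast; linear_combination 4*hc'⟩

lemma brown_base2 (a : ℤ) (ha : Odd a) :
    ∑ x ∈ Finset.range (2 ^ 2), cexp (Real.pi * I * (a:ℂ) * (x:ℂ)^2 / (2:ℂ)^2) =
    (Real.sqrt (2 ^ 2) : ℂ) * cexp (Real.pi * I * ((a:ℂ) + ((2:ℕ):ℂ) * ((a:ℂ)^2-1)/2)/4) := by
  obtain ⟨c, hcC⟩ := odd_sq_sub_one a ha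
  rw [show (2:ℕ)^2 = 4 by norm_num, sum_range_succ, sum_range_succ, sum_range_succ,
    sum_range_succ, sum_range_zero, Real.sqrt_sq (by norm_num : (0:ℝ) ≤ 2)]
  have h0 : (Real.pi:ℂ) * I * (a:ℂ) * ((0:ℕ):ℂ)^2 / (2:ℂ)^2 = 0 := by push_cast; ring
  have h1 : (Real.pi:ℂ) * I * (a:ℂ) * ((1:ℕ):ℂ)^2 / (2:ℂ)^2 = Real.pi * I * (a:ℂ) / 4 := by
    push_cast; ring
  have h2 : (Real.pi:ℂ) * I * (a:ℂ) * ((2:ℕ):ℂ)^2 / (2:ℂ)^2 = (a:ℂ) * (Real.pi * I) := by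
    push_cast; ring
  have h3 : (Real.pi:ℂ) * I * (a:ℂ) * ((3:ℕ):ℂ)^2 / (2:ℂ)^2 =
      Real.pi * I * (a:ℂ) / 4 + (a:ℂ) * (2*Real.pi*I) := by push_cast; ring
  have hR : (Real.pi:ℂ) * I * ((a:ℂ) + ((2:ℕ):ℂ) * ((a:ℂ)^2-1)/2)/4 =
      Real.pi * I * (a:ℂ) / 4 + ((c:ℤ):ℂ) * (2*Real.pi*I) := by
    push_cast
    linear_combination (Real.pi*I/4) * hcC
  rw [h0, h1, h2, h3, hR, exp_period, exp_period, Complex.exp_zero, exp_int_pi a ha]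
  push_cast
  ring

lemma brown_aux (a : ℤ) (ha : Odd a) : ∀ k : ℕ, 1 ≤ k →
    ∑ x ∈ Finset.range (2 ^ k), cexp (Real.pi * I * (a:ℂ) * (x:ℂ)^2 / (2:ℂ)^k) =
    (Real.sqrt (2 ^ k) : ℂ) * cexp (Real.pi * I * ((a:ℂ) + (k:ℂ) * ((a:ℂ)^2-1)/2)/4)
  | 0, h => absurd h (by norm_num)
  | 1, _ => brown_base1 a ha
  | 2, _ => brown_base2 a ha
  | (n+3), _ => by
    have ih := brown_aux a ha (n+1) (by omega)
    rw [brown_step n a ha, ih]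
    obtain ⟨c, hcC⟩ := odd_sq_sub_one a ha
    have hsq : ((Real.sqrt (2^(n+3)) : ℝ) : ℂ) = 2 * ((Real.sqrt (2^(n+1)) : ℝ) : ℂ) := by
      have : Real.sqrt (2^(n+3)) = 2 * Real.sqrt (2^(n+1)) := by
        rw [show (2:ℝ)^(n+3) = 2^2 * 2^(n+1) by ring, Real.sqrt_mul (by positivity),
          Real.sqrt_sq (by norm_num : (0:ℝ) ≤ 2)]
      rw [this]; push_cast; ring
    have hE : (Real.pi:ℂ) * I * ((a:ℂ) + ((n+3:ℕ):ℂ) * ((a:ℂ)^2-1)/2)/4 =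
        Real.pi * I * ((a:ℂ) + ((n+1:ℕ):ℂ) * ((a:ℂ)^2-1)/2)/4 + ((c:ℤ):ℂ) * (2*Real.pi*I) := by
      push_cast
      linear_combination (Real.pi*I/4) * hcC
    rw [hE, exp_period, hsq]
    ring


/-- STATEMENT 7 (Brown invariant of 2-primary cyclic blocks): for `k ≥ 1` and odd `a`,
`Σ_{x<2^k} exp(iπax²/2^k) = 2^{k/2}·exp(iπ(a + k(a²−1)/2)/4)`; equivalently
`Br⟨a/2^k⟩ = a + k(a²−1)/2 mod 8`. -/
theorem brown_two_primary (k : ℕ) (hk : 1 ≤ k) (a : ℤ) (ha : Odd a) :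
    ∑ x ∈ Finset.range (2 ^ k),
        Complex.exp (Real.pi * Complex.I * (a : ℂ) * (x : ℂ) ^ 2 / (2 : ℂ) ^ k) =
      (Real.sqrt (2 ^ k) : ℂ) *
        Complex.exp (Real.pi * Complex.I *
          ((a : ℂ) + (k : ℂ) * ((a : ℂ) ^ 2 - 1) / 2) / 4) := by
  exact brown_aux a ha k hk
end
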